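/- arXiv:2106.06580 — 4 statements merged into one kernel-verified Lean document; each statement's English description precedes it below -/
import Mathlib

section
/- A variable x_i is canalizing for a Boolean polynomial f over F_2 with canalizing input 1 if and only if f(x_1,...,x_i+1,...,x_n) - f(0,...,1,...,0) = x_i · g for some polynomial g, where the 1 in (0,...,1,...,0) is in the i-th coordinate. -/
/-- `x i` is canalizing for `f` over `F_2` with canalizing input `1`
(i.e., `f` is constant, equal to `f(0,…,1,…,0)`, on all `x` with `x i = 1`) iff
`f(x_1,…,x_i + 1,…,x_n) - f(0,…,1,…,0) = x_i · g` for some `g`. -/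
theorem canalizing_input_one_iff_factor {n : ℕ} (f : (Fin n → ZMod 2) → ZMod 2)
    (i : Fin n) :
    (∀ x, x i = 1 → f x = f (Pi.single i 1)) ↔
      ∃ g : (Fin n → ZMod 2) → ZMod 2,
        ∀ x, f (Function.update x i (x i + 1)) - f (Pi.single i 1) = x i * g x := by
  have two : ∀ a : ZMod 2, a = 0 ∨ a = 1 := by decide
  constructor
  · intro h
    refine ⟨fun x => f (Function.update x i (x i + 1)) - f (Pi.single i 1), fun x => ?_⟩
    rcases two (x i) with h0 | h1
    · have hx : (Function.update x i (x i + 1)) i = 1 := by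
        rw [Function.update_self, h0, zero_add]
      rw [h (Function.update x i (x i + 1)) hx, sub_self, h0, zero_mul]
    · simp only [h1, one_mul]
  · rintro ⟨g, hg⟩ x hx
    have := hg (Function.update x i 0)
    rw [Function.update_self] at this
    simp only [zero_mul, zero_add] at this
    rw [Function.update_idem] at this
    have hupd : Function.update x i 1 = x := by
      funext j
      rcases eq_or_ne j i with rfl | hj
      · rw [Function.update_self, hx]
      · rw [Function.update_of_ne hj]
    rw [hupd, sub_eq_zero] at this
    exact this
end

section
/- Every nested canalizing Boolean function in n variables can be written as f = M_1(M_2(⋯(M_{r-1}(M_r + 1) + 1)⋯) + 1) + b over F_2, where each M_i is a nonconstant product of factors of the form (x_j + a_j) with a_j ∈ {0,1}, each variable appears in exactly one M_i, and k_1 + ⋯ + k_r = n where k_i is the number of factors of M_i. -/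
/-- `nestedVal a x [M₁,…,M_r] = M₁(M₂(⋯(M_{r-1}(M_r + 1) + 1)⋯) + 1)` evaluated at `x`,
where each `Mᵢ` is the extended monomial `∏_{v ∈ Mᵢ} (x v + a v)`. -/
def nestedVal {n : ℕ} (a x : Fin n → ZMod 2) : List (Finset (Fin n)) → ZMod 2
  | [] => 0
  | M :: L => (∏ v ∈ M, (x v + a v)) * (nestedVal a x L + 1)

lemma z2_ne : ∀ u w : ZMod 2, u ≠ w → u + w = 1 := by decide
lemma z2_self : ∀ u : ZMod 2, u + u = 0 := by decide
lemma z2_cancel : ∀ a b c : ZMod 2, a + b + (b + c) = a + c := by decide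
lemma z2_flip : ∀ p q c : ZMod 2, c = p + q → q = c + p := by decide
lemma z2_last : ∀ p q c : ZMod 2, c = p + q → q + 1 = (c + 1) + p := by decide

lemma nestedVal_cons {n : ℕ} (a x : Fin n → ZMod 2) (M) (L) :
    nestedVal a x (M :: L) = (∏ v ∈ M, (x v + a v)) * (nestedVal a x L + 1) := rfl

lemma nestedVal_all_one {n : ℕ} (a x : Fin n → ZMod 2) :
    ∀ (r : ℕ) (Ms : Fin r → Finset (Fin n)),
      (∀ i, ∏ v ∈ Ms i, (x v + a v) = 1) →
      nestedVal a x (List.ofFn Ms) = (r : ZMod 2) := by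
  intro r
  induction r with
  | zero => intro Ms h; simp [nestedVal]
  | succ r ih =>
    intro Ms h
    rw [List.ofFn_succ, nestedVal_cons, h 0, ih _ (fun i => h i.succ)]
    push_cast
    ring

lemma nestedVal_first_zero {n : ℕ} (a x : Fin n → ZMod 2) :
    ∀ (r : ℕ) (Ms : Fin r → Finset (Fin n)) (i : Fin r),
      (∀ k, k < i → ∏ v ∈ Ms k, (x v + a v) = 1) →
      (∏ v ∈ Ms i, (x v + a v)) = 0 →
      nestedVal a x (List.ofFn Ms) = ((i : ℕ) : ZMod 2) := by
  intro r
  induction r with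
  | zero => intro Ms i; exact i.elim0
  | succ r ih =>
    intro Ms i h1 h0
    rw [List.ofFn_succ, nestedVal_cons]
    cases i using Fin.cases with
    | zero => rw [h0]; simp
    | succ i' =>
      rw [h1 0 (Fin.succ_pos i'),
        ih (fun k => Ms k.succ) i' (fun k hk => h1 k.succ (Fin.succ_lt_succ_iff.mpr hk)) h0]
      simp only [Fin.val_succ]
      push_cast
      ring

/-- every nested canalizing function `f` in `n` variables can be written as
`f = M₁(M₂(⋯(M_{r-1}(M_r + 1) + 1)⋯) + 1) + b` where the `Mᵢ` are nonconstant extended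
monomials, every variable appears in exactly one `Mᵢ`, and `k₁ + ⋯ + k_r = n`. -/
theorem ncf_nested_form {n : ℕ} (hn : 0 < n) (f : (Fin n → ZMod 2) → ZMod 2)
    (σ : Equiv.Perm (Fin n)) (av bv : Fin n → ZMod 2)
    (hcan : ∀ (x : Fin n → ZMod 2) (j : Fin n),
      (∀ l, l < j → x (σ l) ≠ av l) → x (σ j) = av j → f x = bv j)
    (hlast : ∀ x, (∀ j, x (σ j) ≠ av j) → f x = bv ⟨n - 1, by omega⟩ + 1) :
    ∃ (r : ℕ) (_ : 0 < r) (Ms : Fin r → Finset (Fin n)) (a : Fin n → ZMod 2) (b : ZMod 2),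
      (∀ i, (Ms i).Nonempty) ∧
      (∀ i j, i ≠ j → Disjoint (Ms i) (Ms j)) ∧
      (∀ v : Fin n, ∃ i, v ∈ Ms i) ∧
      (∑ i, (Ms i).card) = n ∧
      (∀ x, f x = nestedVal a x (List.ofFn Ms) + b) := by
  classical
  set bvN : ℕ → ZMod 2 := fun i => if h : i < n then bv ⟨i, h⟩ else 0 with hbvN
  set ρ : ℕ → ℕ := fun j => ∑ i ∈ Finset.range j, (if bvN i = bvN (i+1) then 0 else 1) with hρ
  have hmono : ∀ {j k : ℕ}, j ≤ k → ρ j ≤ ρ k := by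
    intro j k hjk
    apply Finset.sum_le_sum_of_subset (Finset.range_subset_range.2 hjk)
  have hstep : ∀ j, ρ (j+1) ≤ ρ j + 1 := by
    intro j
    have : ρ (j+1) = ρ j + (if bvN j = bvN (j+1) then 0 else 1) := by
      simp [hρ, Finset.sum_range_succ]
    rw [this]
    split <;> omega
  have hpar : ∀ j, j < n → (ρ j : ZMod 2) = bvN 0 + bvN j := by
    intro j
    induction j with
    | zero =>
      intro _
      simp [hρ, (z2_self (bvN 0)).symm]
    | succ j ihj =>
      intro hj
      have h1 : ρ (j+1) = ρ j + (if bvN j = bvN (j+1) then 0 else 1) := by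
        simp [hρ, Finset.sum_range_succ]
      have h2 := ihj (by omega)
      have h3 : (if bvN j = bvN (j+1) then (0:ZMod 2) else 1) = bvN j + bvN (j+1) := by
        split
        · next h => rw [h, z2_self]
        · next h => rw [z2_ne _ _ h]
      rw [h1]
      push_cast
      rw [h2, h3]
      exact z2_cancel _ _ _
  have hsurj : ∀ m i, i ≤ ρ m → ∃ j, j ≤ m ∧ ρ j = i := by
    intro m
    induction m with
    | zero =>
      intro i hi
      have h0 : ρ 0 = 0 := by simp [hρ]
      exact ⟨0, le_refl 0, by omega⟩
    | succ m ihm =>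
      intro i hi
      by_cases h : i ≤ ρ m
      · obtain ⟨j, hj1, hj2⟩ := ihm i h
        exact ⟨j, by omega, hj2⟩
      · have := hstep m
        exact ⟨m+1, le_refl _, by omega⟩
  set r : ℕ := ρ (n-1) + 1 with hr
  have hvlt : ∀ v : Fin n, ρ (σ.symm v : ℕ) < r := by
    intro v
    have h1 : (σ.symm v : ℕ) ≤ n - 1 := by have := (σ.symm v).isLt; omega
    have := hmono h1
    omega
  set g : Fin n → Fin r := fun v => ⟨ρ (σ.symm v : ℕ), hvlt v⟩ with hg
  refine ⟨r, Nat.succ_pos _, fun i => Finset.univ.filter (fun v => g v = i),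
    fun v => av (σ.symm v), bv ⟨0, hn⟩, ?_, ?_, ?_, ?_, ?_⟩
  · -- nonempty
    intro i
    obtain ⟨j, hj, hjρ⟩ := hsurj (n-1) (i : ℕ) (Nat.lt_succ_iff.mp i.isLt)
    have hjn : j < n := by omega
    refine ⟨σ ⟨j, hjn⟩, Finset.mem_filter.mpr ⟨Finset.mem_univ _, ?_⟩⟩
    apply Fin.ext
    simp [hg, hjρ]
  · -- disjoint
    intro i j hij
    rw [Finset.disjoint_left]
    intro v hv hv'
    exact hij ((Finset.mem_filter.mp hv).2.symm.trans (Finset.mem_filter.mp hv').2)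
  · -- cover
    intro v
    exact ⟨g v, Finset.mem_filter.mpr ⟨Finset.mem_univ _, rfl⟩⟩
  · -- sum of cards
    have := Finset.card_eq_sum_card_fiberwise
      (s := (Finset.univ : Finset (Fin n))) (t := (Finset.univ : Finset (Fin r)))
      (f := g) (fun v _ => Finset.mem_univ _)
    rw [Finset.card_univ, Fintype.card_fin] at this
    exact this.symm
  · -- evaluation
    intro x
    by_cases hx : ∃ j : Fin n, x (σ j) = av j
    · set s : Finset (Fin n) := Finset.univ.filter (fun j => x (σ j) = av j) with hs
      have hsne : s.Nonempty := by
        obtain ⟨j, hj⟩ := hx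
        exact ⟨j, Finset.mem_filter.mpr ⟨Finset.mem_univ _, hj⟩⟩
      set j₀ := s.min' hsne with hj₀def
      have hj₀ : x (σ j₀) = av j₀ := (Finset.mem_filter.mp (s.min'_mem hsne)).2
      have hmin : ∀ l, l < j₀ → x (σ l) ≠ av l := by
        intro l hl hcon
        exact absurd (s.min'_le l (Finset.mem_filter.mpr ⟨Finset.mem_univ _, hcon⟩))
          (not_le.mpr hl)
      have hf : f x = bv j₀ := hcan x j₀ hmin hj₀
      have hlt' : ρ (j₀ : ℕ) < r := by
        have h1 : (j₀ : ℕ) ≤ n - 1 := by have := j₀.isLt; omega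
        have := hmono h1; omega
      have h1 : ∀ k, k < (⟨ρ (j₀ : ℕ), hlt'⟩ : Fin r) →
          ∏ v ∈ Finset.univ.filter (fun v => g v = k), (x v + av (σ.symm v)) = 1 := by
        intro k hk
        apply Finset.prod_eq_one
        intro v hv
        have hgv : ρ (σ.symm v : ℕ) = (k : ℕ) :=
          congrArg Fin.val (Finset.mem_filter.mp hv).2
        have hklt : (k : ℕ) < ρ (j₀ : ℕ) := hk
        have hvj : σ.symm v < j₀ := by
          by_contra hge
          have hle : (j₀ : ℕ) ≤ (σ.symm v : ℕ) := not_lt.mp (by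
            intro hcon
            exact hge (by exact hcon))
          have := hmono hle
          omega
        have hne := hmin _ hvj
        rw [Equiv.apply_symm_apply] at hne
        exact z2_ne _ _ hne
      have h0 : ∏ v ∈ Finset.univ.filter (fun v => g v = (⟨ρ (j₀ : ℕ), hlt'⟩ : Fin r)),
          (x v + av (σ.symm v)) = 0 := by
        apply Finset.prod_eq_zero (i := σ j₀)
        · refine Finset.mem_filter.mpr ⟨Finset.mem_univ _, ?_⟩
          apply Fin.ext
          simp [hg]
        · rw [Equiv.symm_apply_apply, hj₀, z2_self]
      have hnv := nestedVal_first_zero (fun v => av (σ.symm v)) x r _ _ h1 h0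
      rw [hnv, hf]
      have hp := hpar (j₀ : ℕ) j₀.isLt
      have e0 : bvN 0 = bv ⟨0, hn⟩ := by simp [hbvN, hn]
      have e1 : bvN (j₀ : ℕ) = bv j₀ := by simp [hbvN, j₀.isLt]
      rw [e0, e1] at hp
      exact z2_flip _ _ _ hp
    · push_neg at hx
      have hf : f x = bv ⟨n - 1, by omega⟩ + 1 := hlast x hx
      have hall : ∀ i : Fin r,
          ∏ v ∈ Finset.univ.filter (fun v => g v = i), (x v + av (σ.symm v)) = 1 := by
        intro i
        apply Finset.prod_eq_one
        intro v _
        have hne := hx (σ.symm v)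
        rw [Equiv.apply_symm_apply] at hne
        exact z2_ne _ _ hne
      have hnv := nestedVal_all_one (fun v => av (σ.symm v)) x r _ hall
      rw [hnv, hf]
      have hp := hpar (n-1) (by omega)
      have e0 : bvN 0 = bv ⟨0, hn⟩ := by simp [hbvN, hn]
      have e1 : bvN (n-1) = bv ⟨n - 1, by omega⟩ := by
        simp [hbvN, Nat.sub_lt hn Nat.one_pos]
      rw [e0, e1] at hp
      rw [hr]
      push_cast
      exact z2_last _ _ _ hp
end

section
/- Let f be a nested canalizing function written as f = M_1(M_2(⋯(M_{r-1}(M_r+1)+1)⋯)+1) + 1 (i.e., b = 1). Then f is logically equivalent to ⋁_{i=0}^{⌊r/2⌋} ( M̄_{2i+1} ∧ ⋀_{j=1}^{i} M_{2j} ), with appropriate conventions when indices exceed r. -/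
/-- Extended monomial `∏_{v ∈ M} (x v + a v)` evaluated at `x`. -/
def monEval {n : ℕ} (a x : Fin n → ZMod 2) (M : Finset (Fin n)) : ZMod 2 :=
  ∏ v ∈ M, (x v + a v)

lemma zmod2_arith (u v t : ZMod 2) :
    u * (v * (t + 1) + 1) = 0 ↔ u = 0 ∨ (v = 1 ∧ t = 0) := by
  revert u v t; decide

lemma nested_zero_iff {n : ℕ} (a x : Fin n → ZMod 2) :
    ∀ (N : ℕ) (L : List (Finset (Fin n))), L.length ≤ N →
    (nestedVal a x L = 0 ↔ ∃ i : ℕ, 2 * i ≤ L.length ∧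
      (2 * i < L.length → monEval a x (L.getD (2 * i) ∅) = 0) ∧
      (∀ j : ℕ, 1 ≤ j → j ≤ i → monEval a x (L.getD (2 * j - 1) ∅) = 1)) := by
  intro N
  induction N using Nat.strong_induction_on with
  | _ N ih =>
    intro L hL
    match L with
    | [] =>
      constructor
      · intro _
        exact ⟨0, by simp, by simp, fun j h1 h2 => absurd h2 (by omega)⟩
      · intro _; rfl
    | [M] =>
      have hv : nestedVal a x [M] = monEval a x M := by
        simp [nestedVal, monEval]
      rw [hv]
      constructor
      · intro h
        exact ⟨0, by simp, fun _ => h, fun j h1 h2 => absurd h2 (by omega)⟩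
      · rintro ⟨i, hi, h0, h1⟩
        have : i = 0 := by simp at hi; omega
        subst this
        exact h0 (by simp)
    | M :: Nd :: L' =>
      have hlen : (M :: Nd :: L').length = L'.length + 2 := by simp
      have IH := ih L'.length (by simp at hL; omega) L' le_rfl
      have hv : nestedVal a x (M :: Nd :: L') =
          monEval a x M * (monEval a x Nd * (nestedVal a x L' + 1) + 1) := rfl
      rw [hv, zmod2_arith, IH]
      constructor
      · rintro (hM | ⟨hN, i, hi, h0, h1⟩)
        · exact ⟨0, by simp, fun _ => hM, fun j h1 h2 => absurd h2 (by omega)⟩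
        · refine ⟨i + 1, by simp; omega, ?_, ?_⟩
          · intro h
            have : 2 * (i + 1) = 2 * i + 2 := by omega
            rw [this]
            simp only [List.getD_cons_succ]
            exact h0 (by simp at h; omega)
          · intro j hj1 hj2
            rcases Nat.eq_or_lt_of_le hj1 with hj | hj
            · have : 2 * j - 1 = 1 := by omega
              rw [this]
              simpa using hN
            · have : 2 * j - 1 = (2 * (j - 1) - 1) + 2 := by omega
              rw [this]
              simp only [List.getD_cons_succ]
              exact h1 (j - 1) (by omega) (by omega)
      · rintro ⟨i, hi, h0, h1⟩
        rcases Nat.eq_zero_or_pos i with rfl | hipos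
        · left
          have := h0 (by simp)
          simpa using this
        · right
          have hN := h1 1 le_rfl hipos
          have e1 : 2 * 1 - 1 = 1 := by norm_num
          rw [e1] at hN
          simp only [List.getD_cons_succ, List.getD_cons_zero] at hN
          refine ⟨hN, i - 1, by simp at hi; omega, ?_, ?_⟩
          · intro h
            have := h0 (by simp; omega)
            have e : 2 * i = (2 * (i - 1)) + 2 := by omega
            rw [e] at this
            simpa using this
          · intro j hj1 hj2
            have := h1 (j + 1) (by omega) (by omega)
            have e : 2 * (j + 1) - 1 = (2 * j - 1) + 2 := by omega
            rw [e] at this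
            simpa using this

/-- for a nested canalizing function
`f = M₁(M₂(⋯(M_{r-1}(M_r+1)+1)⋯)+1) + 1` (i.e. `b = 1`), `f` is logically equivalent to
`⋁_{i=0}^{⌊r/2⌋} ( M̄_{2i+1} ∧ ⋀_{j=1}^{i} M_{2j} )`, where `M̄` is the negation of `M`
(so `M̄ = 1 ↔ M = 0`), with an out-of-range `M̄_{r+1}` treated as true (vacuous
hypothesis). Indices here are 0-based: `Ms ⟨2*i⟩ = M_{2i+1}`. -/
theorem dnf_of_ncf_b1 {n r : ℕ} (hr : 0 < r) (Ms : Fin r → Finset (Fin n))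
    (a : Fin n → ZMod 2)
    (hne : ∀ i, (Ms i).Nonempty)
    (hdisj : ∀ i j, i ≠ j → Disjoint (Ms i) (Ms j))
    (hcover : ∀ v, ∃ i, v ∈ Ms i)
    (f : (Fin n → ZMod 2) → ZMod 2)
    (hf : ∀ x, f x = nestedVal a x (List.ofFn Ms) + 1) :
    ∀ x, f x = 1 ↔
      ∃ (i : ℕ) (_ : 2 * i ≤ r),
        (∀ h : 2 * i < r, monEval a x (Ms ⟨2 * i, h⟩) = 0) ∧
        (∀ (j : ℕ) (_h1 : 1 ≤ j) (_h2 : j ≤ i), monEval a x (Ms ⟨2 * j - 1, by omega⟩) = 1) := by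
  intro x
  have hlen : (List.ofFn Ms).length = r := by simp
  have key := nested_zero_iff a x (List.ofFn Ms).length (List.ofFn Ms) le_rfl
  have hf1 : f x = 1 ↔ nestedVal a x (List.ofFn Ms) = 0 := by
    rw [hf x]
    constructor
    · intro h
      have : nestedVal a x (List.ofFn Ms) + 1 + 1 = 1 + 1 := by rw [h]
      simpa using this
    · intro h; rw [h, zero_add]
  rw [hf1, key]
  have hget : ∀ (m : ℕ) (h : m < r), (List.ofFn Ms).getD m ∅ = Ms ⟨m, h⟩ := by
    intro m h
    rw [List.getD_eq_getElem _ _ (by omega : m < (List.ofFn Ms).length)]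
    simp
  constructor
  · rintro ⟨i, hi, h0, h1⟩
    rw [hlen] at hi
    refine ⟨i, hi, ?_, ?_⟩
    · intro h
      rw [← hget (2*i) h]
      exact h0 (by omega)
    · intro j hj1 hj2
      rw [← hget (2*j-1) (by omega)]
      exact h1 j hj1 hj2
  · rintro ⟨i, hi, h0, h1⟩
    refine ⟨i, by omega, ?_, ?_⟩
    · intro h
      rw [hget (2*i) (by omega)]
      exact h0 (by omega)
    · intro j hj1 hj2
      rw [hget (2*j-1) (by omega)]
      exact h1 j hj1 hj2
end

section
/- Let g be a Boolean function (e.g., given by a CNF formula) in variables x_1,...,x_n and let f(x_1,...,x_n,y) = g(x_1,...,x_n) ∧ y. Then: (1) if g is unsatisfiable, f is identically 0 and hence has 0 canalizing layers; (2) if g is satisfiable, then y = 0 canalizes f to 0, so f has at least 1 canalizing layer. Consequently, g is satisfiable if and only if f has at least one canalizing layer. -/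
/-- let `f(x, y) = g(x) ∧ y` on `n + 1` variables (with `y` the last
variable). Then (1) if `g` is unsatisfiable, `f` is identically false (0 layers);
(2) if `g` is satisfiable, `y = 0` canalizes `f` to `0`; and (3) `g` is satisfiable iff
`f` is canalizing (has at least one canalizing layer). -/
theorem sat_iff_canalizing {n : ℕ} (g : (Fin n → Bool) → Bool)
    (f : (Fin (n + 1) → Bool) → Bool)
    (hf : ∀ z, f z = (g (fun i => z i.castSucc) && z (Fin.last n))) :
    ((∀ x, g x = false) → ∀ z, f z = false) ∧
    ((∃ x, g x = true) → ∀ z, z (Fin.last n) = false → f z = false) ∧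
    ((∃ x, g x = true) ↔
      ∃ (i : Fin (n + 1)) (a b : Bool),
        (∀ z, z i = a → f z = b) ∧ ¬ (∀ z, f (Function.update z i (!a)) = b)) := by
  refine ⟨fun hg z => by simp [hf z, hg], fun _ z hz => by simp [hf z, hz], ?_, ?_⟩
  · rintro ⟨x, hx⟩
    refine ⟨Fin.last n, false, false, fun z hz => by simp [hf z, hz], fun h => ?_⟩
    have := h (Fin.snoc x false)
    rw [hf] at this
    simp only [Bool.not_false] at this
    rw [Function.update_self] at this
    have hcast : ∀ i : Fin n,
        Function.update (Fin.snoc x false : Fin (n+1) → Bool) (Fin.last n) true i.castSucc = x i := by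
      intro i
      rw [Function.update_of_ne (by simp [Fin.ext_iff, i.isLt.ne]) , Fin.snoc_castSucc]
    simp only [hcast, hx] at this
    simp at this
  · rintro ⟨i, a, b, h1, h2⟩
    by_contra hg
    push_neg at hg
    have hg' : ∀ x, g x = false := fun x => by
      cases hx : g x with
      | false => rfl
      | true => exact absurd hx (hg x)
    have hf0 : ∀ z, f z = false := fun z => by simp [hf z, hg']
    have hb : b = false := by
      have := h1 (Function.update (fun _ => false) i a) (by simp)
      rw [hf0] at this; exact this.symm
    exact h2 fun z => by rw [hf0, hb]
end
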